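/- Under the hypotheses of Lemma 1, the iterative sequence x_{n+1} = (x_n + f(x_n))/2 with x₀ ∈ [a,c) satisfies x_n ∈ [a,c] for all n (i.e., [a,c] is invariant under x ↦ (x+f(x))/2). -/

import Mathlib

/-! The map `g x = (x + f x) / 2` is invariant on `[a, c]`: below, `g x ≥ a` because `f x > x`
off the fixed point `c`; above, `f' ≥ -1` makes `f x + x` monotone, so `f x + x ≤ f c + c = 2c`. -/

open Set

theorem monotoneOn_add_id_Icc_of_neg_one_le_deriv {f : ℝ → ℝ} {a c : ℝ}
    (hcont : ContinuousOn f (Icc a c))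
    (hdiff : ∀ x ∈ Ioo a c, DifferentiableAt ℝ f x)
    (hderiv : ∀ x ∈ Ioo a c, -1 ≤ deriv f x) :
    MonotoneOn (fun t => f t + t) (Icc a c) := by
  refine monotoneOn_of_deriv_nonneg (convex_Icc a c) (hcont.add continuousOn_id) ?_ ?_
  · rw [interior_Icc]
    exact fun t ht => ((hdiff t ht).add differentiableAt_fun_id).differentiableWithinAt
  · rw [interior_Icc]
    intro t ht
    rw [deriv_fun_add (hdiff t ht) differentiableAt_fun_id, deriv_id'']
    linarith [hderiv t ht]

theorem mapsTo_midpoint_Icc_of_monotoneOn_add_id {f : ℝ → ℝ} {a c : ℝ}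
    (hmono : MonotoneOn (fun t => f t + t) (Icc a c))
    (hgt : ∀ x ∈ Ico a c, f x > x) (hfix : f c = c) :
    MapsTo (fun x => (x + f x) / 2) (Icc a c) (Icc a c) := by
  intro y hy
  have hc : c ∈ Icc a c := ⟨hy.1.trans hy.2, le_rfl⟩
  have hupper : f y + y ≤ f c + c := hmono hy hc hy.2
  have hlower : a ≤ f y := by
    rcases hy.2.lt_or_eq with hlt | rfl
    · linarith [hgt y ⟨hy.1, hlt⟩, hy.1]
    · linarith [hy.1]
  constructor <;> linarith [hy.1]

theorem stmt3_general (f : ℝ → ℝ) (a c : ℝ)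
    (hcont : ContinuousOn f (Set.Icc a c))
    (hdiff : ∀ x ∈ Set.Ioo a c, DifferentiableAt ℝ f x)
    (hderiv : ∀ x ∈ Set.Ioo a c, -1 ≤ deriv f x)
    (hgt : ∀ x ∈ Set.Ico a c, f x > x)
    (hfix : f c = c)
    (x : ℕ → ℝ) (hx0 : x 0 ∈ Set.Ico a c)
    (hrec : ∀ n, x (n + 1) = (x n + f (x n)) / 2) :
    ∀ n, x n ∈ Set.Icc a c := by
  have hmaps := mapsTo_midpoint_Icc_of_monotoneOn_add_id
    (monotoneOn_add_id_Icc_of_neg_one_le_deriv hcont hdiff hderiv) hgt hfix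
  intro n
  induction n with
  | zero => exact Ico_subset_Icc_self hx0
  | succ n ih => exact hrec n ▸ hmaps ih

theorem stmt3 (f : ℝ → ℝ) (a c : ℝ) (hac : a < c)
    (hcont : ContinuousOn f (Set.Icc a c))
    (hdiff : ∀ x ∈ Set.Ioo a c, DifferentiableAt ℝ f x)
    (hderiv : ∀ x ∈ Set.Ioo a c, -1 ≤ deriv f x)
    (hgt : ∀ x ∈ Set.Ico a c, f x > x)
    (hfix : f c = c)
    (x : ℕ → ℝ) (hx0 : x 0 ∈ Set.Ico a c)
    (hrec : ∀ n, x (n + 1) = (x n + f (x n)) / 2) :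
    ∀ n, x n ∈ Set.Icc a c :=
  stmt3_general f a c hcont hdiff hderiv hgt hfix x hx0 hrec
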